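/- arXiv:1101.3898 — 3 statements merged into one kernel-verified Lean document; each statement's English description precedes it below -/
import Mathlib

section
/- For complex numbers z, w and real numbers p, q > 1 with 1/p + 1/q = 1, one has |z + w|² ≤ p|z|² + q|w|², with equality if and only if w = (p-1)z. -/
/-! Writing `p = 1 + r` with `r > 0`, the conjugate exponent is `q = 1 + r⁻¹`, and expanding the
squares gives the exact identity
`p‖z‖² + q‖w‖² = ‖z + w‖² + r⁻¹ ‖r z - w‖²`,
so the defect in the inequality is a nonnegative multiple of `‖r z - w‖²`. -/

section WeightedNormSq

variable {E : Type*} [NormedAddCommGroup E] [InnerProductSpace ℝ E]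

theorem norm_add_sq_add_inv_mul_norm_smul_sub_sq {r : ℝ} (hr : r ≠ 0) (x y : E) :
    ‖x + y‖ ^ 2 + r⁻¹ * ‖r • x - y‖ ^ 2 = (1 + r) * ‖x‖ ^ 2 + (1 + r⁻¹) * ‖y‖ ^ 2 := by
  rw [norm_add_sq_real, norm_sub_sq_real, norm_smul, inner_smul_left, Real.norm_eq_abs,
    mul_pow, sq_abs]
  simp only [conj_trivial]
  field_simp
  ring

theorem norm_add_sq_le_weighted {r : ℝ} (hr : 0 < r) (x y : E) :
    ‖x + y‖ ^ 2 ≤ (1 + r) * ‖x‖ ^ 2 + (1 + r⁻¹) * ‖y‖ ^ 2 := by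
  rw [← norm_add_sq_add_inv_mul_norm_smul_sub_sq hr.ne']
  exact le_add_of_nonneg_right (by positivity)

theorem norm_add_sq_eq_weighted_iff {r : ℝ} (hr : 0 < r) (x y : E) :
    ‖x + y‖ ^ 2 = (1 + r) * ‖x‖ ^ 2 + (1 + r⁻¹) * ‖y‖ ^ 2 ↔ y = r • x := by
  rw [← norm_add_sq_add_inv_mul_norm_smul_sub_sq hr.ne', left_eq_add,
    mul_eq_zero_iff_left (inv_ne_zero hr.ne'), sq_eq_zero_iff, norm_eq_zero, sub_eq_zero, eq_comm]

end WeightedNormSq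

theorem bohr_inequality_general (z w : ℂ) (p q : ℝ) (hp : 1 < p)
    (hpq : 1 / p + 1 / q = 1) :
    ‖z + w‖ ^ 2 ≤ p * ‖z‖ ^ 2 + q * ‖w‖ ^ 2 ∧
    (‖z + w‖ ^ 2 = p * ‖z‖ ^ 2 + q * ‖w‖ ^ 2 ↔
      w = (p - 1 : ℂ) * z) := by
  have hr : 0 < p - 1 := sub_pos.2 hp
  have hp_eq : p = 1 + (p - 1) := by ring
  have hq_eq : q = 1 + (p - 1)⁻¹ := by
    have hq0 : q ≠ 0 := by rintro rfl; simp at hpq; linarith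
    field_simp at hpq ⊢
    linarith
  have hsmul : (p - 1 : ℂ) * z = (p - 1 : ℝ) • z := by simp [Complex.real_smul]
  rw [hsmul, hq_eq, hp_eq, add_sub_cancel_left]
  exact ⟨norm_add_sq_le_weighted hr z w, norm_add_sq_eq_weighted_iff hr z w⟩

/-- **Classical Bohr inequality.** For complex `z, w` and real `p, q > 1` with
`1/p + 1/q = 1`, one has `|z + w|² ≤ p|z|² + q|w|²`, with equality iff `w = (p-1)z`. -/
theorem bohr_inequality (z w : ℂ) (p q : ℝ) (hp : 1 < p) (hq : 1 < q)
    (hpq : 1 / p + 1 / q = 1) :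
    ‖z + w‖ ^ 2 ≤ p * ‖z‖ ^ 2 + q * ‖w‖ ^ 2 ∧
    (‖z + w‖ ^ 2 = p * ‖z‖ ^ 2 + q * ‖w‖ ^ 2 ↔
      w = (p - 1 : ℂ) * z) :=
  bohr_inequality_general z w p q hp hpq
end

section
/- Let z₁, …, z_m be complex numbers, p₁, …, p_m > 0 real numbers, and r > 1. Then |∑_{j=1}^m z_j|^r ≤ (∑_{j=1}^m p_j^{1/(1-r)})^{r-1} · ∑_{j=1}^m p_j |z_j|^r. -/
/-!
Put `w_j = p_j ^ (1/(1-r))`, so that `p_j = w_j ^ (1-r)`. The weighted Hölder inequality applied to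
the weights `w_j` and the values `|z_j| / w_j`, raised to the power `r`, bounds `(∑ |z_j|) ^ r` by
`(∑ w_j) ^ (r-1) · ∑ w_j ^ (1-r) |z_j| ^ r`; the triangle inequality does the rest.
-/

open Finset Real

variable {ι : Type*} (s : Finset ι)

theorem Real.rpow_inner_le_weight_mul_Lp_of_nonneg {r : ℝ} (hr : 1 ≤ r) (w f : ι → ℝ)
    (hw : ∀ i, 0 ≤ w i) (hf : ∀ i, 0 ≤ f i) :
    (∑ i ∈ s, w i * f i) ^ r ≤ (∑ i ∈ s, w i) ^ (r - 1) * ∑ i ∈ s, w i * f i ^ r := by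
  have hr₀ : 0 < r := zero_lt_one.trans_le hr
  have hW : 0 ≤ ∑ i ∈ s, w i := sum_nonneg fun i _ ↦ hw i
  have hWF : 0 ≤ ∑ i ∈ s, w i * f i ^ r :=
    sum_nonneg fun i _ ↦ mul_nonneg (hw i) (rpow_nonneg (hf i) r)
  calc (∑ i ∈ s, w i * f i) ^ r
      ≤ ((∑ i ∈ s, w i) ^ (1 - r⁻¹) * (∑ i ∈ s, w i * f i ^ r) ^ r⁻¹) ^ r :=
        rpow_le_rpow (sum_nonneg fun i _ ↦ mul_nonneg (hw i) (hf i))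
          (inner_le_weight_mul_Lp_of_nonneg s hr w f hw hf) hr₀.le
    _ = (∑ i ∈ s, w i) ^ (r - 1) * ∑ i ∈ s, w i * f i ^ r := by
        rw [mul_rpow (rpow_nonneg hW _) (rpow_nonneg hWF _), ← rpow_mul hW, ← rpow_mul hWF,
          inv_mul_cancel₀ hr₀.ne', rpow_one, sub_mul, one_mul, inv_mul_cancel₀ hr₀.ne']

theorem Real.rpow_sum_le_sum_weight_mul_sum_rpow {r : ℝ} (hr : 1 < r) (w a : ι → ℝ)
    (hw : ∀ i, 0 < w i) (ha : ∀ i, 0 ≤ a i) :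
    (∑ i ∈ s, a i) ^ r ≤ (∑ i ∈ s, w i) ^ (r - 1) * ∑ i ∈ s, w i ^ (1 - r) * a i ^ r := by
  have hwa (i : ι) : w i * (a i / w i) = a i := mul_div_cancel₀ _ (hw i).ne'
  have hwar (i : ι) : w i * (a i / w i) ^ r = w i ^ (1 - r) * a i ^ r := by
    rw [div_rpow (ha i) (hw i).le, rpow_sub (hw i), rpow_one]
    field_simp
  simpa only [hwa, hwar] using rpow_inner_le_weight_mul_Lp_of_nonneg s hr.le w (fun i ↦ a i / w i)
    (fun i ↦ (hw i).le) (fun i ↦ div_nonneg (ha i) (hw i).le)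

/-- **Vasić–Kečkić inequality.** For complex `z₁,…,z_m`, positive reals `p₁,…,p_m`
and `r > 1`, `|∑ z_j|^r ≤ (∑ p_j^{1/(1-r)})^{r-1} · ∑ p_j |z_j|^r`. -/
theorem vasic_keckic_inequality (m : ℕ) (z : Fin m → ℂ) (p : Fin m → ℝ)
    (hp : ∀ j, 0 < p j) (r : ℝ) (hr : 1 < r) :
    ‖∑ j, z j‖ ^ r ≤
      (∑ j, p j ^ (1 / (1 - r))) ^ (r - 1) * ∑ j, p j * ‖z j‖ ^ r := by
  have hp_eq (j : Fin m) : (p j ^ (1 / (1 - r))) ^ (1 - r) = p j := by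
    rw [← rpow_mul (hp j).le, one_div_mul_cancel (sub_ne_zero.2 hr.ne), rpow_one]
  calc ‖∑ j, z j‖ ^ r
      ≤ (∑ j, ‖z j‖) ^ r := rpow_le_rpow (norm_nonneg _) (norm_sum_le _ _) (by linarith)
    _ ≤ (∑ j, p j ^ (1 / (1 - r))) ^ (r - 1) * ∑ j, (p j ^ (1 / (1 - r))) ^ (1 - r) * ‖z j‖ ^ r :=
        rpow_sum_le_sum_weight_mul_sum_rpow _ hr _ _ (fun j ↦ rpow_pos_of_pos (hp j) _)
          (fun j ↦ norm_nonneg _)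
    _ = _ := by simp only [hp_eq]
end

section
/- Let A be an n×n Hermitian matrix with spectrum contained in an interval J containing 0, and let f : J → ℝ be convex with f(0) ≤ 0. Then for every vector x ∈ ℂⁿ with ‖x‖ ≤ 1, f(⟨Ax, x⟩) ≤ ⟨f(A)x, x⟩. -/
open Matrix ComplexOrder

noncomputable def matFun {n : ℕ} (f : ℝ → ℝ) (A : Matrix (Fin n) (Fin n) ℂ) :
    Matrix (Fin n) (Fin n) ℂ :=
  if hA : A.IsHermitian then
    (hA.eigenvectorUnitary : Matrix (Fin n) (Fin n) ℂ) *
      Matrix.diagonal (fun i => (f (hA.eigenvalues i) : ℂ)) *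
      (hA.eigenvectorUnitary : Matrix (Fin n) (Fin n) ℂ)ᴴ
  else 0

/-- `lam A j` : the `j`-th largest eigenvalue (0-indexed) of a Hermitian matrix `A`. -/
noncomputable def lam {n : ℕ} (A : Matrix (Fin n) (Fin n) ℂ) (j : ℕ) : ℝ :=
  if hA : A.IsHermitian then
    if h : j < n then (hA.eigenvalues ∘ Tuple.sort hA.eigenvalues) ((⟨j, h⟩ : Fin n).rev)
    else 0
  else 0

/-- Loewner order. -/
def loewnerLE {n : ℕ} (A B : Matrix (Fin n) (Fin n) ℂ) : Prop := (B - A).PosSemidef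

/-- `|B| = (B^* B)^{1/2}`. -/
noncomputable def matAbs {n : ℕ} (B : Matrix (Fin n) (Fin n) ℂ) : Matrix (Fin n) (Fin n) ℂ :=
  (Matrix.posSemidef_conjTranspose_mul_self B).isHermitian.eigenvectorUnitary.1 *
    Matrix.diagonal ((↑) ∘ (√·) ∘ (Matrix.posSemidef_conjTranspose_mul_self B).isHermitian.eigenvalues) *
    (star (Matrix.posSemidef_conjTranspose_mul_self B).isHermitian.eigenvectorUnitary : Matrix (Fin n) (Fin n) ℂ)

/-- `|B|^r` via functional calculus. -/
noncomputable def matAbsPow {n : ℕ} (B : Matrix (Fin n) (Fin n) ℂ) (r : ℝ) :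
    Matrix (Fin n) (Fin n) ℂ :=
  matFun (fun t => t ^ r) (matAbs B)

/-! Diagonalise `A = U D Uᴴ` with `U` unitary. Both quadratic forms become averages
`∑ wᵢ λᵢ` and `∑ wᵢ f(λᵢ)` with weights `wᵢ = |(Uᴴx)ᵢ|²` summing to `‖x‖² ≤ 1`. The missing
mass `1 - ∑ wᵢ` is put on the point `0 ∈ J`, where Jensen's inequality costs `f 0 ≤ 0`. -/

theorem ConvexOn.map_sum_le_sum_of_sum_le_one {𝕜 E β ι : Type*} [Field 𝕜] [LinearOrder 𝕜]
    [IsStrictOrderedRing 𝕜] [AddCommGroup E] [AddCommGroup β] [PartialOrder β]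
    [IsOrderedAddMonoid β] [Module 𝕜 E] [Module 𝕜 β] [IsStrictOrderedModule 𝕜 β]
    {s : Set E} {f : E → β} {t : Finset ι} {w : ι → 𝕜} {p : ι → E}
    (hf : ConvexOn 𝕜 s f) (h0 : 0 ∈ s) (hf0 : f 0 ≤ 0) (hw : ∀ i ∈ t, 0 ≤ w i)
    (hw1 : ∑ i ∈ t, w i ≤ 1) (hp : ∀ i ∈ t, p i ∈ s) :
    f (∑ i ∈ t, w i • p i) ≤ ∑ i ∈ t, w i • f (p i) := by
  have hv : 0 ≤ 1 - ∑ i ∈ t, w i := sub_nonneg.2 hw1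
  have hjensen := hf.map_add_sum_le hw (sub_add_cancel _ _) hp hv h0
  rw [smul_zero, zero_add] at hjensen
  calc f (∑ i ∈ t, w i • p i)
      ≤ (1 - ∑ i ∈ t, w i) • f 0 + ∑ i ∈ t, w i • f (p i) := hjensen
    _ ≤ ∑ i ∈ t, w i • f (p i) :=
      add_le_of_nonpos_left (smul_nonpos_of_nonneg_of_nonpos hv hf0)

theorem Matrix.re_star_dotProduct_conj_diagonal_mulVec {ι : Type*} [Fintype ι] [DecidableEq ι]
    (U : Matrix ι ι ℂ) (d : ι → ℝ) (x : ι → ℂ) :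
    (star x ⬝ᵥ ((U * diagonal (fun i => (d i : ℂ)) * Uᴴ) *ᵥ x)).re
      = ∑ i, d i * Complex.normSq ((Uᴴ *ᵥ x) i) := by
  rw [← mulVec_mulVec, ← mulVec_mulVec, dotProduct_mulVec, ← conjTranspose_conjTranspose U,
    ← star_mulVec, conjTranspose_conjTranspose, dotProduct, Complex.re_sum]
  refine Finset.sum_congr rfl fun i _ => ?_
  rw [mulVec_diagonal, Pi.star_apply, Complex.star_def, mul_left_comm,
    ← Complex.normSq_eq_conj_mul_self, ← Complex.ofReal_mul, Complex.ofReal_re]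

theorem Matrix.sum_normSq_conjTranspose_mulVec_eq_norm_sq {ι : Type*} [Fintype ι]
    [DecidableEq ι] {U : Matrix ι ι ℂ} (hU : U ∈ unitaryGroup ι ℂ) (x : EuclideanSpace ℂ ι) :
    ∑ i, Complex.normSq ((Uᴴ *ᵥ (x : ι → ℂ)) i) = ‖x‖ ^ 2 := by
  have hUUH : U * diagonal (fun _ => ((1 : ℝ) : ℂ)) * Uᴴ = 1 := by
    rw [Complex.ofReal_one, diagonal_one, mul_one]
    exact mem_unitaryGroup_iff.mp hU
  have hquad := re_star_dotProduct_conj_diagonal_mulVec U (fun _ => 1) x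
  rw [hUUH, one_mulVec] at hquad
  simp only [one_mul] at hquad
  rw [← hquad, ← RCLike.re_to_complex, ← inner_self_eq_norm_sq (𝕜 := ℂ),
    EuclideanSpace.inner_eq_star_dotProduct, dotProduct_comm]

/-- The interval `J` is encoded as a convex set: the convex subsets of `ℝ` are exactly the
intervals, and convexity of `J` is part of `ConvexOn`. -/
theorem convex_inner_le {n : ℕ} (A : Matrix (Fin n) (Fin n) ℂ) (hA : A.IsHermitian)
    (J : Set ℝ) (h0 : (0 : ℝ) ∈ J) (f : ℝ → ℝ) (hf : ConvexOn ℝ J f) (hf0 : f 0 ≤ 0)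
    (hspec : ∀ i, hA.eigenvalues i ∈ J)
    (x : EuclideanSpace ℂ (Fin n)) (hx : ‖x‖ ≤ 1) :
    f ((star (x : Fin n → ℂ) ⬝ᵥ (A *ᵥ (x : Fin n → ℂ))).re) ≤
      (star (x : Fin n → ℂ) ⬝ᵥ (matFun f A *ᵥ (x : Fin n → ℂ))).re := by
  set U : Matrix (Fin n) (Fin n) ℂ := (hA.eigenvectorUnitary : Matrix (Fin n) (Fin n) ℂ)
  have hA_eq : U * diagonal (fun i => (hA.eigenvalues i : ℂ)) * Uᴴ = A :=
    hA.spectral_theorem.symm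
  have hquadA := re_star_dotProduct_conj_diagonal_mulVec U hA.eigenvalues x
  rw [hA_eq] at hquadA
  have hw1 : ∑ i, Complex.normSq ((Uᴴ *ᵥ (x : Fin n → ℂ)) i) ≤ 1 := by
    rw [sum_normSq_conjTranspose_mulVec_eq_norm_sq hA.eigenvectorUnitary.2]
    exact pow_le_one₀ (norm_nonneg x) hx
  have hjensen := hf.map_sum_le_sum_of_sum_le_one h0 hf0
    (fun i _ => Complex.normSq_nonneg _) hw1 (fun i _ => hspec i)
  rw [matFun, dif_pos hA, re_star_dotProduct_conj_diagonal_mulVec, hquadA]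
  simpa only [smul_eq_mul, mul_comm] using hjensen
end
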